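/- arXiv:2412.04420 — 2 statements merged into one kernel-verified Lean document; each statement's English description precedes it below -/
import Mathlib

section
/- Let φ : V(Ĝ) → V(G) be a covering map between simple graphs, and let W be a nonempty set of vertices of G such that the induced subgraph G[W] is connected. Let v̂₀ ∈ φ⁻¹(W) and let K be the set of vertices of φ⁻¹(W) reachable from v̂₀ within the induced subgraph Ĝ[φ⁻¹(W)]. Then the restriction of φ to K is a covering map from Ĝ[K] onto G[W]. In other words, every connected component of the lift of a connected induced subgraph of G is a cover of that subgraph. -/
/-- `φ` is a covering map from the simple graph `Ghat` to the simple graph `G`. -/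
def IsGraphCoveringMap {W V : Type*} (Ghat : SimpleGraph W) (G : SimpleGraph V)
    (φ : W → V) : Prop :=
  Function.Surjective φ ∧
    ∀ w : W, Set.BijOn φ (Ghat.neighborSet w) (G.neighborSet (φ w))

/-- Every connected component of the lift `Ĝ[φ⁻¹(Ws)]` of a connected induced
subgraph `G[Ws]` is a cover of `G[Ws]`: restricting `φ` to the set `K` of
vertices of the lift reachable (within the lift) from a fixed vertex `v̂₀`
gives a covering map from `Ĝ[K]` onto `G[Ws]`. -/
theorem component_of_lift_is_cover {W V : Type*} (Ghat : SimpleGraph W)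
    (G : SimpleGraph V) (φ : W → V) (hφ : IsGraphCoveringMap Ghat G φ)
    (Ws : Set V) (hWs : Ws.Nonempty) (hconn : (G.induce Ws).Connected)
    (v0 : ↥(φ ⁻¹' Ws)) :
    IsGraphCoveringMap
      ((Ghat.induce (φ ⁻¹' Ws)).induce
        {x : ↥(φ ⁻¹' Ws) | (Ghat.induce (φ ⁻¹' Ws)).Reachable v0 x})
      (G.induce Ws)
      (fun x => ⟨φ x.1.1, x.1.2⟩) := by
  obtain ⟨hsurj, hbij⟩ := hφ
  have lift_edge : ∀ (x : ↥(φ ⁻¹' Ws)) (u : Ws), G.Adj (φ x.1) u.1 →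
      ∃ y : ↥(φ ⁻¹' Ws), Ghat.Adj x.1 y.1 ∧ φ y.1 = u.1 := by
    intro x u hadj
    obtain ⟨y, hy, hyeq⟩ := (hbij x.1).surjOn (by exact hadj : u.1 ∈ G.neighborSet (φ x.1))
    exact ⟨⟨y, by simp [Set.mem_preimage, hyeq, u.2]⟩, hy, hyeq⟩
  constructor
  · rintro ⟨w, hw⟩
    have hreach : (G.induce Ws).Reachable ⟨φ v0.1, v0.2⟩ ⟨w, hw⟩ :=
      hconn.preconnected _ _
    rw [SimpleGraph.reachable_iff_reflTransGen] at hreach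
    have key : ∀ (c : Ws), Relation.ReflTransGen (G.induce Ws).Adj ⟨φ v0.1, v0.2⟩ c →
        ∃ x : {x : ↥(φ ⁻¹' Ws) | (Ghat.induce (φ ⁻¹' Ws)).Reachable v0 x},
          φ x.1.1 = c.1 := by
      intro c h
      induction h with
      | refl => exact ⟨⟨v0, SimpleGraph.Reachable.refl v0⟩, rfl⟩
      | tail hab hbc ih =>
        obtain ⟨x, hx⟩ := ih
        rename_i b c
        have hadj : G.Adj (φ x.1.1) c.1 := by
          have : G.Adj (b : V) (c : V) := hbc
          rwa [← hx] at this
        obtain ⟨y, hy1, hy2⟩ := lift_edge x.1 c hadj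
        have hHyx : (Ghat.induce (φ ⁻¹' Ws)).Adj x.1 y := hy1
        have hyK : (Ghat.induce (φ ⁻¹' Ws)).Reachable v0 y :=
          (x.2 : (Ghat.induce (φ ⁻¹' Ws)).Reachable v0 x.1).trans hHyx.reachable
        exact ⟨⟨y, hyK⟩, hy2⟩
    obtain ⟨x, hx⟩ := key ⟨w, hw⟩ hreach
    exact ⟨x, Subtype.ext hx⟩
  · rintro ⟨x, hx⟩
    constructor
    · rintro ⟨y, hy⟩ hadj
      exact (hbij x.1).mapsTo hadj
    constructor
    · rintro ⟨y1, hy1⟩ ha1 ⟨y2, hy2⟩ ha2 heq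
      have := (hbij x.1).injOn ha1 ha2 (congrArg Subtype.val heq)
      exact Subtype.ext (Subtype.ext this)
    · rintro ⟨u, hu⟩ hadj
      obtain ⟨y, hy1, hy2⟩ := lift_edge x ⟨u, hu⟩ hadj
      have hHyx : (Ghat.induce (φ ⁻¹' Ws)).Adj x y := hy1
      have hyK : (Ghat.induce (φ ⁻¹' Ws)).Reachable v0 y :=
        (hx : (Ghat.induce (φ ⁻¹' Ws)).Reachable v0 x).trans hHyx.reachable
      exact ⟨⟨y, hyK⟩, hy1, Subtype.ext hy2⟩
end

section
/- Let T be a finite tree, let k be a positive natural number, and let X be a set of vertices of T with |X| ≥ k². Then either T contains a path P with |X ∩ V(P)| ≥ k, or T contains a subtree S whose set L of leaves satisfies |X ∩ L| ≥ k. -/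
/-!
Root the tree at a vertex `r ∈ X` and order the vertices by ancestry (`x` lies on the path from
`r` to `y`). If no path meets `X` in `k` vertices, every `x ∈ X` has between `1` and `k - 1`
ancestors in `X`, and the vertices of `X` with the same count are pairwise incomparable; as
`|X| ≥ k² > (k - 1)²`, one of these antichains has at least `k` elements. The union of the root
paths to such an antichain is a subtree in which every maximal non-root vertex, in particular
every element of the antichain, is a leaf: its only neighbour there is its parent.
-/

open Set

namespace SimpleGraph.IsTree

variable {V : Type*} {T : SimpleGraph V} (hT : T.IsTree)

noncomputable def path (u v : V) : T.Walk u v :=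
  (hT.existsUnique_path u v).choose

lemma isPath_path (u v : V) : (hT.path u v).IsPath :=
  (hT.existsUnique_path u v).choose_spec.1

lemma eq_path {u v : V} {p : T.Walk u v} (hp : p.IsPath) : p = hT.path u v :=
  (hT.existsUnique_path u v).unique hp (hT.isPath_path u v)

def IsAncestor (r x y : V) : Prop :=
  x ∈ (hT.path r y).support

variable {hT} {r x y z : V}

lemma isAncestor_refl (r x : V) : hT.IsAncestor r x x :=
  (hT.path r x).end_mem_support

lemma root_isAncestor (r x : V) : hT.IsAncestor r r x :=
  (hT.path r x).start_mem_support

lemma path_eq_takeUntil [DecidableEq V] (h : hT.IsAncestor r x y) :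
    hT.path r x = (hT.path r y).takeUntil x h :=
  (hT.eq_path ((hT.isPath_path r y).takeUntil h)).symm

lemma IsAncestor.trans (hxy : hT.IsAncestor r x y) (hyz : hT.IsAncestor r y z) :
    hT.IsAncestor r x z := by
  classical
  unfold IsAncestor at *
  rw [path_eq_takeUntil hyz] at hxy
  exact (hT.path r z).support_takeUntil_subset_support hyz hxy

lemma IsAncestor.length_lt (hxy : hT.IsAncestor r x y) (hne : x ≠ y) :
    (hT.path r x).length < (hT.path r y).length := by
  classical
  rw [path_eq_takeUntil hxy]
  exact Walk.length_takeUntil_lt_length hxy hne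

lemma IsAncestor.antisymm (hxy : hT.IsAncestor r x y) (hyx : hT.IsAncestor r y x) : x = y := by
  by_contra hne
  exact (hxy.length_lt hne).asymm (hyx.length_lt (Ne.symm hne))

lemma isAncestor_or_isAncestor_of_adj (h : T.Adj x y) :
    hT.IsAncestor r x y ∨ hT.IsAncestor r y x :=
  or_iff_not_imp_left.2 fun hx => hT.isAcyclic.mem_support_of_ne_mem_support_of_adj_of_isPath
    (hT.isPath_path r x) (hT.isPath_path r y) h hx

lemma existsUnique_adj_isAncestor (hx : x ≠ r) :
    ∃! y, T.Adj x y ∧ hT.IsAncestor r y x := by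
  have hnil : ¬(hT.path r x).Nil := Walk.not_nil_of_ne hx.symm
  refine ⟨(hT.path r x).penultimate, ⟨(Walk.adj_penultimate hnil).symm, ?_⟩, ?_⟩
  · exact (hT.path r x).getVert_mem_support _
  · rintro y ⟨hxy, hy⟩
    exact hT.isAcyclic.eq_penultimate_of_adj_end (hT.isPath_path r x) hxy hy

lemma existsUnique_adj_of_maximal {S : Set V}
    (hS : ∀ ⦃x y⦄, hT.IsAncestor r x y → y ∈ S → x ∈ S) (hx : x ∈ S) (hxr : x ≠ r)
    (hmax : ∀ y ∈ S, hT.IsAncestor r x y → y = x) :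
    ∃! y, y ∈ S ∧ T.Adj x y := by
  obtain ⟨p, ⟨hxp, hp⟩, hunique⟩ := existsUnique_adj_isAncestor (hT := hT) hxr
  refine ⟨p, ⟨hS hp hx, hxp⟩, fun y ⟨hy, hxy⟩ => hunique y ⟨hxy, ?_⟩⟩
  refine (isAncestor_or_isAncestor_of_adj hxy).resolve_left fun hxy' => ?_
  exact hxy.ne (hmax y hy hxy').symm

lemma connected_induce_of_isAncestor_closed {S : Set V} (hr : r ∈ S)
    (hS : ∀ ⦃x y⦄, hT.IsAncestor r x y → y ∈ S → x ∈ S) : (T.induce S).Connected :=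
  induce_connected_of_patches r hr fun {v} hv =>
    ⟨{x | x ∈ (hT.path r v).support}, fun _ hx => hS hx hv, (hT.path r v).start_mem_support,
      (hT.path r v).end_mem_support, (hT.path r v).connected_induce_support.preconnected _ _⟩

lemma exists_connected_induce_leaves_superset {A : Set V}
    (hA : IsAntichain (hT.IsAncestor r) A) (hA2 : A.Nontrivial) :
    ∃ S : Set V, S.Nonempty ∧ (T.induce S).Connected ∧
      A ⊆ {x | x ∈ S ∧ ∃! y, y ∈ S ∧ T.Adj x y} := by
  set S := {x | ∃ a ∈ A, hT.IsAncestor r x a}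
  have hS : ∀ ⦃x y⦄, hT.IsAncestor r x y → y ∈ S → x ∈ S :=
    fun x y hxy ⟨a, ha, hya⟩ => ⟨a, ha, hxy.trans hya⟩
  have hAS : A ⊆ S := fun a ha => ⟨a, ha, isAncestor_refl r a⟩
  obtain ⟨a₀, ha₀⟩ := hA2.nonempty
  have hr : r ∈ S := ⟨a₀, ha₀, root_isAncestor r a₀⟩
  refine ⟨S, ⟨r, hr⟩, connected_induce_of_isAncestor_closed hr hS, fun a ha => ⟨hAS ha, ?_⟩⟩
  have hmax : ∀ y ∈ S, hT.IsAncestor r a y → y = a := by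
    rintro y ⟨b, hb, hyb⟩ hay
    obtain rfl : a = b := hA.eq ha hb (hay.trans hyb)
    exact hyb.antisymm hay
  have har : a ≠ r := by
    rintro rfl
    obtain ⟨b, hb, hba⟩ := hA2.exists_ne a
    exact hba (hA.eq ha hb (root_isAncestor a b)).symm
  exact existsUnique_adj_of_maximal hS (hAS ha) har hmax

lemma ncard_inter_isAncestor_lt {X : Set V} (hX : X.Finite) (hxy : hT.IsAncestor r x y)
    (hne : x ≠ y) (hy : y ∈ X) :
    (X ∩ {z | hT.IsAncestor r z x}).ncard < (X ∩ {z | hT.IsAncestor r z y}).ncard :=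
  ncard_lt_ncard ⟨fun _ hz => ⟨hz.1, hz.2.trans hxy⟩,
    fun hsub => hne ((hsub ⟨hy, isAncestor_refl r y⟩).2.antisymm hxy).symm⟩ (hX.inter_of_left _)

lemma exists_isAntichain_of_ncard_inter_isAncestor_le {X : Set V} (hX : X.Finite) {m n : ℕ}
    (hchain : ∀ y, (X ∩ {x | hT.IsAncestor r x y}).ncard ≤ m) (hcard : m * n < X.ncard) :
    ∃ A ⊆ X, IsAntichain (hT.IsAncestor r) A ∧ n < A.ncard := by
  classical
  set level : V → ℕ := fun y => (X ∩ {x | hT.IsAncestor r x y}).ncard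
  have hlevel : ∀ y ∈ hX.toFinset, level y ∈ Finset.Icc 1 m := fun y hy =>
    Finset.mem_Icc.2 ⟨(ncard_pos (hX.inter_of_left _)).2
      ⟨y, (hX.mem_toFinset).1 hy, isAncestor_refl r y⟩, hchain y⟩
  obtain ⟨i, -, hi⟩ := Finset.exists_lt_card_fiber_of_mul_lt_card_of_maps_to hlevel
    (by rwa [Nat.card_Icc, Nat.add_sub_cancel, ← ncard_eq_toFinset_card X hX])
  refine ⟨↑({x ∈ hX.toFinset | level x = i}), fun x hx => ?_, ?_, by rwa [ncard_coe_finset]⟩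
  · exact (hX.mem_toFinset).1 (Finset.mem_filter.1 hx).1
  · intro a ha b hb hne hab
    simp only [Finset.coe_filter, Finite.mem_toFinset] at ha hb
    exact (ncard_inter_isAncestor_lt hX hab hne hb.1).ne (ha.2.trans hb.2.symm)

end SimpleGraph.IsTree

open SimpleGraph

theorem tree_path_or_leafy_subtree_general {V : Type*}
    (T : SimpleGraph V) (hT : T.IsTree) (k : ℕ) (hk : 0 < k)
    (X : Set V) (hX : k ^ 2 ≤ X.ncard) :
    (∃ (u v : V) (P : T.Walk u v), P.IsPath ∧
        k ≤ (X ∩ {x : V | x ∈ P.support}).ncard) ∨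
      (∃ S : Set V, S.Nonempty ∧ (T.induce S).Connected ∧
        k ≤ (X ∩ {x : V | x ∈ S ∧ ∃! y, y ∈ S ∧ T.Adj x y}).ncard) := by
  have hXpos : 0 < X.ncard := lt_of_lt_of_le (by positivity) hX
  have hXfin : X.Finite := finite_of_ncard_pos hXpos
  obtain ⟨r, hr⟩ := nonempty_of_ncard_ne_zero hXpos.ne'
  refine or_iff_not_imp_left.2 fun hpath => ?_
  push Not at hpath
  have hk2 : 1 < k := by simpa [hr] using hpath r r .nil .nil
  obtain ⟨A, hAX, hA, hAcard⟩ :=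
    hT.exists_isAntichain_of_ncard_inter_isAncestor_le (r := r) hXfin (m := k - 1) (n := k - 1)
      (fun v => Nat.le_pred_of_lt (hpath r v _ (hT.isPath_path r v)))
      (lt_of_lt_of_le (by rw [sq]; exact Nat.mul_self_lt_mul_self (by omega)) hX)
  obtain ⟨S, hS, hconn, hleaves⟩ := hT.exists_connected_induce_leaves_superset hA
    (one_lt_ncard_iff_nontrivial_and_finite.1 (by omega)).1
  refine ⟨S, hS, hconn, ?_⟩
  calc k ≤ A.ncard := by omega
    _ ≤ _ := ncard_le_ncard (subset_inter hAX hleaves) (hXfin.inter_of_left _)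

/-- Let `T` be a finite tree and `X` a set of vertices with `|X| ≥ k²` (`k > 0`).
Then either `T` contains a path `P` with `|X ∩ V(P)| ≥ k`, or `T` contains a
subtree `S` such that at least `k` leaves of `S` belong to `X`. -/
theorem tree_path_or_leafy_subtree {V : Type*} [Fintype V]
    (T : SimpleGraph V) (hT : T.IsTree) (k : ℕ) (hk : 0 < k)
    (X : Set V) (hX : k ^ 2 ≤ X.ncard) :
    (∃ (u v : V) (P : T.Walk u v), P.IsPath ∧
        k ≤ (X ∩ {x : V | x ∈ P.support}).ncard) ∨
      (∃ S : Set V, S.Nonempty ∧ (T.induce S).Connected ∧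
        k ≤ (X ∩ {x : V | x ∈ S ∧ ∃! y, y ∈ S ∧ T.Adj x y}).ncard) :=
  tree_path_or_leafy_subtree_general T hT k hk X hX
end
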